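/- Let W ⊆ ℍ^n be an open convex set and let K ⊆ W be compact. Then the ℋ_RSL(W)-convex hull K̂_W := {z ∈ W : ‖f(z)‖ ≤ sup_{ζ ∈ K} ‖f(ζ)‖ for every function f : W → ℍ that is RSS on W} is a compact subset of W; in other words, every open convex subset of ℍ^n is ℋ_RSL-holomorphically convex. -/

import Mathlib

noncomputable section

open scoped ComplexConjugate

/-- The first complex component of a quaternion `q = t + u·j`, identifying `ℂ` with the
real span of `1` and `i` inside the quaternions: `t = q.re + q.imI * I`. -/
def qt (q : Quaternion ℝ) : ℂ := ⟨q.re, q.imI⟩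

/-- The second complex component of a quaternion `q = t + u·j`: `u = q.imJ + q.imK * I`. -/
def qu (q : Quaternion ℝ) : ℂ := ⟨q.imJ, q.imK⟩

/-- The quaternion `t + u·j` built from two complex numbers. -/
def mkQ (t u : ℂ) : Quaternion ℝ := ⟨t.re, t.im, u.re, u.im⟩

/-- `f : ℍ^n → ℍ` is right superlinearly superdifferentiable (RSS) on `U`:
writing `f = f₁ + f₂·j` with `f₁ = qt ∘ f`, `f₂ = qu ∘ f`, and each coordinate
`z_k = t_k + u_k·j`, the component `f₁` is jointly holomorphic in `(t₁,…,t_n)` and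
antiholomorphic in `(u₁,…,u_n)` (i.e. `(t, v) ↦ f₁` at `u_k = conj (v_k)` is jointly
holomorphic), and `f₂` is jointly holomorphic in the `u`'s and antiholomorphic in the `t`'s. -/
def RSS {n : ℕ} (U : Set (Fin n → Quaternion ℝ))
    (f : (Fin n → Quaternion ℝ) → Quaternion ℝ) : Prop :=
  DifferentiableOn ℂ
    (fun p : (Fin n → ℂ) × (Fin n → ℂ) =>
      qt (f fun k => mkQ (p.1 k) (conj (p.2 k))))
    {p | (fun k => mkQ (p.1 k) (conj (p.2 k))) ∈ U} ∧
  DifferentiableOn ℂ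
    (fun p : (Fin n → ℂ) × (Fin n → ℂ) =>
      qu (f fun k => mkQ (conj (p.1 k)) (p.2 k)))
    {p | (fun k => mkQ (conj (p.1 k)) (p.2 k)) ∈ U}

/-- The `ℋ_RSL(W)`-convex hull of a compact set `K ⊆ W`:
all `z ∈ W` with `‖f z‖ ≤ sup_{ζ ∈ K} ‖f ζ‖` for every `f` RSS on `W`. -/
def rslHullIn {n : ℕ} (W K : Set (Fin n → Quaternion ℝ)) : Set (Fin n → Quaternion ℝ) :=
  {z | z ∈ W ∧ ∀ f : (Fin n → Quaternion ℝ) → Quaternion ℝ,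
    RSS W f → ‖f z‖ ≤ ⨆ ζ ∈ K, ‖f ζ‖}


/-! A point outside a closed convex set `C ⊇ K` is separated from `C` by a real linear functional
`ℓ`. In the coordinates `(t, conj u)` the functional `ℓ` is the real part of a complex-linear `g`,
so `z ↦ exp (g z)` (as the first component) is RSS with norm `exp ℓ`, and the point is not in the
hull. Taking for `C` the closure of the convex hull of `K`, which is compact and (as `W` is open
and convex) contained in `W`, traps the hull in a compact subset of `W`; since RSS functions are
continuous, the hull is relatively closed in `W`, hence closed. -/

open Metric

theorem thickening_convexHull {E : Type*} [NormedAddCommGroup E] [NormedSpace ℝ E]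
    (δ : ℝ) (s : Set E) : thickening δ (convexHull ℝ s) = convexHull ℝ (thickening δ s) := by
  rw [← add_ball_zero, ← add_ball_zero, convexHull_add, (convex_ball 0 δ).convexHull_eq]

theorem ContinuousOn.of_comp_rightInverse {P Z Y : Type*} [TopologicalSpace P]
    [TopologicalSpace Z] [TopologicalSpace Y] {φ : P → Z} {ψ : Z → P} {g : Z → Y} {U : Set Z}
    (hψ : ContinuousOn ψ U) (hφψ : ∀ z ∈ U, φ (ψ z) = z) (hg : ContinuousOn (g ∘ φ) (φ ⁻¹' U)) :
    ContinuousOn g U :=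
  (hg.comp hψ fun z hz => by simpa [Set.mem_preimage, hφψ z hz]).congr fun z hz => by
    simp [hφψ z hz]

def quatEquiv : (ℂ × ℂ) ≃L[ℝ] Quaternion ℝ :=
  LinearEquiv.toContinuousLinearEquiv
    { toFun := fun p => mkQ p.1 p.2
      invFun := fun q => (qt q, qu q)
      map_add' := fun _ _ => rfl
      map_smul' := fun r p => by ext <;> simp [mkQ] <;> rfl
      left_inv := fun _ => rfl
      right_inv := fun _ => rfl }

@[fun_prop]
theorem continuous_qt : Continuous qt := (continuous_fst.comp quatEquiv.symm.continuous :)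

@[fun_prop]
theorem continuous_qu : Continuous qu := (continuous_snd.comp quatEquiv.symm.continuous :)

theorem norm_mkQ_zero (t : ℂ) : ‖mkQ t 0‖ = ‖t‖ := by
  rw [← mul_self_inj (norm_nonneg _) (norm_nonneg _), ← Quaternion.normSq_eq_norm_mul_self,
    Complex.norm_mul_self_eq_normSq, Complex.normSq_apply, Quaternion.normSq_def']
  simp [mkQ, sq]

theorem RSS.continuousOn {n : ℕ} {U : Set (Fin n → Quaternion ℝ)}
    {f : (Fin n → Quaternion ℝ) → Quaternion ℝ} (hf : RSS U f) : ContinuousOn f U := by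
  have hqt : ContinuousOn (qt ∘ f) U :=
    ContinuousOn.of_comp_rightInverse
      (φ := fun (p : (Fin n → ℂ) × (Fin n → ℂ)) k => mkQ (p.1 k) (conj (p.2 k)))
      (ψ := fun z => (fun k => qt (z k), fun k => conj (qu (z k))))
      (by fun_prop) (fun z _ => by simp only [Complex.conj_conj]; rfl) hf.1.continuousOn
  have hqu : ContinuousOn (qu ∘ f) U :=
    ContinuousOn.of_comp_rightInverse
      (φ := fun (p : (Fin n → ℂ) × (Fin n → ℂ)) k => mkQ (conj (p.1 k)) (p.2 k))
      (ψ := fun z => (fun k => conj (qt (z k)), fun k => qu (z k)))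
      (by fun_prop) (fun z _ => by simp only [Complex.conj_conj]; rfl) hf.2.continuousOn
  exact quatEquiv.continuous.comp_continuousOn (hqt.prodMk hqu)

/-- The real-linear chart `(t, v) ↦ (t_k + conj v_k · j)_k` in which the first component of an
RSS function is holomorphic. -/
def rssChart (n : ℕ) : ((Fin n → ℂ) × (Fin n → ℂ)) →L[ℝ] (Fin n → Quaternion ℝ) :=
  .pi fun k => quatEquiv.toContinuousLinearMap ∘L
    ((ContinuousLinearMap.proj k).prodMap (Complex.conjCLE.toContinuousLinearMap ∘L .proj k))

theorem rssChart_apply {n : ℕ} (p : (Fin n → ℂ) × (Fin n → ℂ)) :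
    rssChart n p = fun k => mkQ (p.1 k) (conj (p.2 k)) := rfl

theorem exists_rss_norm_eq_exp {n : ℕ} (U : Set (Fin n → Quaternion ℝ))
    (ℓ : StrongDual ℝ (Fin n → Quaternion ℝ)) :
    ∃ F : (Fin n → Quaternion ℝ) → Quaternion ℝ, RSS U F ∧ ∀ z, ‖F z‖ = Real.exp (ℓ z) := by
  set g : StrongDual ℂ ((Fin n → ℂ) × (Fin n → ℂ)) := StrongDual.extendRCLike (ℓ ∘L rssChart n)
  set ψ : (Fin n → Quaternion ℝ) → (Fin n → ℂ) × (Fin n → ℂ) :=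
    fun z => (fun k => qt (z k), fun k => conj (qu (z k)))
  have hψ : ∀ p, ψ (rssChart n p) = p := fun p =>
    Prod.ext rfl (funext fun k => Complex.conj_conj (p.2 k))
  have hchart : ∀ z, rssChart n (ψ z) = z := fun z => by
    simp only [ψ, rssChart_apply, Complex.conj_conj]; rfl
  refine ⟨fun z => mkQ (Complex.exp (g (ψ z))) 0, ⟨?_, ?_⟩, fun z => ?_⟩
  · exact g.differentiable.cexp.differentiableOn.congr fun p _ =>
      congrArg (Complex.exp ∘ g) (hψ p)
  · exact (differentiableOn_const 0).congr fun _ _ => rfl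
  · rw [norm_mkQ_zero, Complex.norm_exp]
    exact congrArg Real.exp
      ((StrongDual.re_extendRCLike_apply (𝕜 := ℂ) _ (ψ z)).trans (congrArg ℓ (hchart z)))

theorem rslHullIn_subset_of_isClosed_of_convex {n : ℕ} {W K C : Set (Fin n → Quaternion ℝ)}
    (hC : IsClosed C) (hCconv : Convex ℝ C) (hKC : K ⊆ C) : rslHullIn W K ⊆ C := by
  intro z hz
  by_contra hzC
  obtain ⟨ℓ, u, hCu, huz⟩ := geometric_hahn_banach_closed_point hCconv hC hzC
  obtain ⟨F, hF, hFnorm⟩ := exists_rss_norm_eq_exp W ℓ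
  have hsup : ⨆ ζ ∈ K, ‖F ζ‖ ≤ Real.exp u := by
    refine Real.iSup_le (fun ζ => Real.iSup_le (fun hζ => ?_) (Real.exp_nonneg u))
      (Real.exp_nonneg u)
    rw [hFnorm, Real.exp_le_exp]
    exact (hCu ζ (hKC hζ)).le
  have hzu := (hz.2 F hF).trans hsup
  rw [hFnorm, Real.exp_le_exp] at hzu
  linarith

theorem closure_rslHullIn_inter_subset {n : ℕ} (W K : Set (Fin n → Quaternion ℝ)) :
    closure (rslHullIn W K) ∩ W ⊆ rslHullIn W K := by
  rintro z ⟨hz, hzW⟩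
  refine ⟨hzW, fun f hf => ?_⟩
  have hcont : ContinuousWithinAt (‖f ·‖) (rslHullIn W K) z :=
    (hf.continuousOn.norm z hzW).mono fun w hw => hw.1
  exact hcont.closure_le hz continuousWithinAt_const fun w hw => hw.2 f hf

/-- Note 2.18.1 (quaternion `ℋ_RSL`-version of Henkin–Leiterer Corollary 1.3.6/Theorem 1.3.7):
every open convex subset `W` of `ℍ^n` is `ℋ_RSL`-holomorphically convex, i.e. for each compact
`K ⊆ W` the `ℋ_RSL(W)`-convex hull of `K` is a compact subset of `W`. -/
theorem isCompact_rslHullIn_of_convex {n : ℕ} (W : Set (Fin n → Quaternion ℝ))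
    (hWopen : IsOpen W) (hWconv : Convex ℝ W)
    (K : Set (Fin n → Quaternion ℝ)) (hK : IsCompact K) (hKW : K ⊆ W) :
    IsCompact (rslHullIn W K) ∧ rslHullIn W K ⊆ W := by
  obtain ⟨ε, hε, hKε⟩ := hK.exists_thickening_subset_open hWopen hKW
  have hCW : closure (convexHull ℝ K) ⊆ W := calc
    closure (convexHull ℝ K) ⊆ thickening ε (convexHull ℝ K) := closure_subset_thickening hε _
    _ = convexHull ℝ (thickening ε K) := thickening_convexHull ε K
    _ ⊆ W := convexHull_min hKε hWconv
  have hsub : rslHullIn W K ⊆ closure (convexHull ℝ K) :=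
    rslHullIn_subset_of_isClosed_of_convex isClosed_closure (convex_convexHull ℝ K).closure
      ((subset_convexHull ℝ K).trans subset_closure)
  have hclosed : IsClosed (rslHullIn W K) := isClosed_of_closure_subset fun z hz =>
    closure_rslHullIn_inter_subset W K ⟨hz, hCW (closure_minimal hsub isClosed_closure hz)⟩
  exact ⟨(isBounded_convexHull.2 hK.isBounded).isCompact_closure.of_isClosed_subset hclosed hsub,
    fun z hz => hz.1⟩
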